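/- arXiv:0902.2355 — 2 statements merged into one kernel-verified Lean document; each statement's English description precedes it below -/
import Mathlib

section
/- A dagger kernel category is Boolean (i.e. m ∧ n = 0 implies m† ∘ n = 0 for all kernels m, n) if and only if every orthomodular lattice KSub(X) is a Boolean algebra (i.e. distributive). -/
/-!
If every `KSub(X)` is distributive and `m ∧ n = 0`, then
`n = n ∧ (m ∨ m^⊥) = (n ∧ m) ∨ (n ∧ m^⊥) = n ∧ m^⊥ ≤ m^⊥`, i.e. `m† ∘ n = 0`.

Conversely, let the category be Boolean and put `a = m ∧ (n ∨ k)`, `d = (m ∧ n) ∨ (m ∧ k)`;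
`d ≤ a` holds in any lattice. A kernel `v` below `a` and `d^⊥` meets `n` inside `m ∧ n ≤ d`,
hence trivially, so Booleanness makes `v` orthogonal to `n`, and likewise to `k`; then `v` is
orthogonal to `n ∨ k ≥ v`, so `v = 0`. Thus `a ∧ d^⊥ = 0`, and Booleanness once more gives
`a ≤ d^⊥⊥ = d`.
-/

open CategoryTheory Limits

universe v u

class Dagger (C : Type u) [Category.{v} C] [HasZeroMorphisms C] where
  dag : ∀ {X Y : C}, (X ⟶ Y) → (Y ⟶ X)
  dag_dag : ∀ {X Y : C} (f : X ⟶ Y), dag (dag f) = f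
  dag_comp : ∀ {X Y Z : C} (f : X ⟶ Y) (g : Y ⟶ Z), dag (f ≫ g) = dag g ≫ dag f
  dag_id : ∀ (X : C), dag (𝟙 X) = 𝟙 X
  dag_zero : ∀ (X Y : C), dag (0 : X ⟶ Y) = 0

namespace Dagger

variable {C : Type u} [Category.{v} C] [HasZeroMorphisms C] [Dagger C]

/-- `f` is a dagger mono: `f† ∘ f = id`. -/
def DaggerMono {X Y : C} (f : X ⟶ Y) : Prop := f ≫ dag f = 𝟙 X

/-- `f` is a dagger epi: `f ∘ f† = id`. -/
def DaggerEpi {X Y : C} (f : X ⟶ Y) : Prop := dag f ≫ f = 𝟙 Y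

/-- `k` is a kernel of `f`. -/
structure IsKer {K X Y : C} (f : X ⟶ Y) (k : K ⟶ X) : Prop where
  comp_zero : k ≫ f = 0
  lift : ∀ {Z : C} (g : Z ⟶ X), g ≫ f = 0 → ∃! h : Z ⟶ K, h ≫ k = g

/-- `k` is a kernel of `f` which is moreover a dagger mono. -/
def IsDagKer {K X Y : C} (f : X ⟶ Y) (k : K ⟶ X) : Prop :=
  IsKer f k ∧ DaggerMono k

/-- `k` is a (dagger-monic) kernel of some map. -/
def KernelMap {K X : C} (k : K ⟶ X) : Prop :=
  ∃ (Y : C) (f : X ⟶ Y), IsDagKer f k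

/-- order of subobjects, by factorisation -/
def SubLE {M N X : C} (m : M ⟶ X) (n : N ⟶ X) : Prop :=
  ∃ φ : M ⟶ N, φ ≫ n = m

/-- equality of subobjects -/
def SubEq {M N X : C} (m : M ⟶ X) (n : N ⟶ X) : Prop :=
  SubLE m n ∧ SubLE n m

/-- `p` represents the orthocomplement `m^⊥ = ker(m†)` of `m`. -/
def IsOrthoOf {M P X : C} (m : M ⟶ X) (p : P ⟶ X) : Prop :=
  IsDagKer (dag m) p

/-- `w` is the meet (intersection) of the kernels `m` and `n` in `KSub(X)`. -/
def IsMeet {M N W X : C} (m : M ⟶ X) (n : N ⟶ X) (w : W ⟶ X) : Prop :=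
  KernelMap w ∧ SubLE w m ∧ SubLE w n ∧
    ∀ {K : C} (k : K ⟶ X), KernelMap k → SubLE k m → SubLE k n → SubLE k w

/-- `j` is the join `m ∨ n = (m^⊥ ∧ n^⊥)^⊥` in `KSub(X)`. -/
def IsJoin {M N J X : C} (m : M ⟶ X) (n : N ⟶ X) (j : J ⟶ X) : Prop :=
  ∃ (MP NP W : C) (mp : MP ⟶ X) (np : NP ⟶ X) (w : W ⟶ X),
    IsOrthoOf m mp ∧ IsOrthoOf n np ∧ IsMeet mp np w ∧ IsOrthoOf w j

/-- `p` represents the pullback `f⁻¹(n) = ker(coker(n) ∘ f)` of the kernel `n` along `f`. -/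
def IsInvImg {N P X Y : C} (f : X ⟶ Y) (n : N ⟶ Y) (p : P ⟶ X) : Prop :=
  ∃ (NP : C) (np : NP ⟶ Y), IsOrthoOf n np ∧ IsDagKer (f ≫ dag np) p

/-- `i` represents the image `ker(coker(f)) = ker(ker(f†)†)` of `f`. -/
def IsImg {I X Y : C} (f : X ⟶ Y) (i : I ⟶ Y) : Prop :=
  ∃ (K : C) (k : K ⟶ Y), IsDagKer (dag f) k ∧ IsDagKer (dag k) i

/-- zero-mono: `m ∘ f = 0` implies `f = 0`. -/
def ZeroMono {X Y : C} (m : X ⟶ Y) : Prop :=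
  ∀ {Z : C} (f : Z ⟶ X), f ≫ m = 0 → f = 0

/-- zero-epi: `f ∘ e = 0` implies `f = 0`. -/
def ZeroEpi {X Y : C} (e : X ⟶ Y) : Prop :=
  ∀ {Z : C} (f : Y ⟶ Z), e ≫ f = 0 → f = 0

end Dagger

/-- A dagger kernel category: a dagger category with a zero object in which
every morphism has a kernel that is a dagger mono. -/
class DagKerCat (C : Type u) [Category.{v} C] [HasZeroMorphisms C]
    [HasZeroObject C] extends Dagger C where
  hasKer : ∀ {X Y : C} (f : X ⟶ Y), ∃ (K : C) (k : K ⟶ X), Dagger.IsDagKer f k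

namespace Dagger

variable {C : Type u} [Category.{v} C]

lemma subLE_refl {M X : C} (m : M ⟶ X) : SubLE m m := ⟨𝟙 M, Category.id_comp m⟩

lemma SubLE.trans {A B D X : C} {a : A ⟶ X} {b : B ⟶ X} {d : D ⟶ X}
    (hab : SubLE a b) (hbd : SubLE b d) : SubLE a d := by
  obtain ⟨φ, rfl⟩ := hab
  obtain ⟨ψ, rfl⟩ := hbd
  exact ⟨φ ≫ ψ, Category.assoc φ ψ d⟩

section Basic

variable [HasZeroMorphisms C]

lemma SubLE.comp_eq_zero {W P X Y : C} {w : W ⟶ X} {p : P ⟶ X} {f : X ⟶ Y}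
    (hwp : SubLE w p) (hp : p ≫ f = 0) : w ≫ f = 0 := by
  obtain ⟨φ, rfl⟩ := hwp
  rw [Category.assoc, hp, comp_zero]

variable [Dagger C]

lemma DaggerMono.cancel {X Y Z : C} {f : X ⟶ Y} (hf : DaggerMono f) {g h : Z ⟶ X}
    (e : g ≫ f = h ≫ f) : g = h := by
  simpa only [Category.assoc, show f ≫ dag f = 𝟙 X from hf, Category.comp_id] using
    congrArg (· ≫ dag f) e

lemma comp_dag_eq_zero_comm {X Y Z : C} {f : X ⟶ Y} {g : Z ⟶ Y} (h : f ≫ dag g = 0) :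
    g ≫ dag f = 0 := by
  simpa only [dag_comp, dag_dag, dag_zero] using congrArg dag h

lemma SubLE.comp_dag_eq_zero {Q L Z X : C} {q : Q ⟶ X} {l : L ⟶ X} {x : Z ⟶ X}
    (hql : SubLE q l) (hx : x ≫ dag l = 0) : x ≫ dag q = 0 :=
  comp_dag_eq_zero_comm (hql.comp_eq_zero (comp_dag_eq_zero_comm hx))

lemma IsDagKer.comp_eq_zero {K X Y : C} {f : X ⟶ Y} {k : K ⟶ X} (h : IsDagKer f k) :
    k ≫ f = 0 :=
  h.1.comp_zero

lemma IsDagKer.subLE_iff {K X Y Z : C} {f : X ⟶ Y} {k : K ⟶ X} (h : IsDagKer f k)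
    {g : Z ⟶ X} : SubLE g k ↔ g ≫ f = 0 := by
  refine ⟨fun hg => hg.comp_eq_zero h.comp_eq_zero, fun hg => ?_⟩
  obtain ⟨φ, hφ, -⟩ := h.1.lift g hg
  exact ⟨φ, hφ⟩

lemma KernelMap.daggerMono {K X : C} {k : K ⟶ X} (h : KernelMap k) : DaggerMono k := by
  obtain ⟨_, _, hf⟩ := h
  exact hf.2

lemma IsOrthoOf.kernelMap {M P X : C} {m : M ⟶ X} {p : P ⟶ X} (h : IsOrthoOf m p) :
    KernelMap p :=
  ⟨_, _, h⟩

lemma eq_zero_of_subLE_of_comp_dag_eq_zero {W A X : C} {w : W ⟶ X} {a : A ⟶ X}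
    (hwa : SubLE w a) (hw : w ≫ dag a = 0) (ha : DaggerMono a) : w = 0 := by
  obtain ⟨φ, rfl⟩ := hwa
  have hφ : φ = 0 := by
    rw [← Category.comp_id φ, ← show a ≫ dag a = 𝟙 A from ha, ← Category.assoc, hw]
  rw [hφ, zero_comp]

lemma IsOrthoOf.symm_of_forall_subLE {E L X : C} {e : E ⟶ X} {l : L ⟶ X}
    (he : DaggerMono e) (hl : IsOrthoOf e l)
    (hclosed : ∀ {Z : C} (x : Z ⟶ X), x ≫ dag l = 0 → SubLE x e) : IsOrthoOf l e := by
  refine ⟨⟨comp_dag_eq_zero_comm hl.comp_eq_zero, fun x hx => ?_⟩, he⟩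
  obtain ⟨φ, hφ⟩ := hclosed x hx
  exact ⟨φ, hφ, fun ψ hψ => he.cancel (hψ.trans hφ.symm)⟩

lemma IsOrthoOf.symm {M P X : C} {m : M ⟶ X} {p : P ⟶ X} (hm : KernelMap m)
    (hp : IsOrthoOf m p) : IsOrthoOf p m := by
  obtain ⟨_, f, hf⟩ := hm
  refine hp.symm_of_forall_subLE hf.2 fun x hx => hf.subLE_iff.2 ?_
  have hfp : SubLE (dag f) p :=
    hp.subLE_iff.2 (by rw [← dag_comp, hf.comp_eq_zero, dag_zero])
  simpa only [dag_dag] using hfp.comp_dag_eq_zero hx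

lemma IsMeet.kernelMap {M N W X : C} {m : M ⟶ X} {n : N ⟶ X} {w : W ⟶ X}
    (h : IsMeet m n w) : KernelMap w :=
  h.1

lemma IsMeet.subLE_left {M N W X : C} {m : M ⟶ X} {n : N ⟶ X} {w : W ⟶ X}
    (h : IsMeet m n w) : SubLE w m :=
  h.2.1

lemma IsMeet.subLE_right {M N W X : C} {m : M ⟶ X} {n : N ⟶ X} {w : W ⟶ X}
    (h : IsMeet m n w) : SubLE w n :=
  h.2.2.1

lemma IsMeet.subLE_meet {M N W K X : C} {m : M ⟶ X} {n : N ⟶ X} {w : W ⟶ X}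
    (h : IsMeet m n w) {k : K ⟶ X} (hk : KernelMap k) (hkm : SubLE k m) (hkn : SubLE k n) :
    SubLE k w :=
  h.2.2.2 k hk hkm hkn

lemma IsMeet.symm {M N W X : C} {m : M ⟶ X} {n : N ⟶ X} {w : W ⟶ X}
    (h : IsMeet m n w) : IsMeet n m w :=
  ⟨h.kernelMap, h.subLE_right, h.subLE_left, fun _ hk hkn hkm => h.subLE_meet hk hkm hkn⟩

lemma IsJoin.kernelMap {M N J X : C} {m : M ⟶ X} {n : N ⟶ X} {j : J ⟶ X}
    (hj : IsJoin m n j) : KernelMap j := by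
  obtain ⟨_, _, _, _, _, _, -, -, -, hwj⟩ := hj
  exact hwj.kernelMap

lemma IsJoin.left_subLE {M N J X : C} {m : M ⟶ X} {n : N ⟶ X} {j : J ⟶ X}
    (hj : IsJoin m n j) : SubLE m j := by
  obtain ⟨_, _, _, _, _, _, hmp, -, hw, hwj⟩ := hj
  exact hwj.subLE_iff.2 (hw.subLE_left.comp_dag_eq_zero (comp_dag_eq_zero_comm hmp.comp_eq_zero))

lemma IsJoin.right_subLE {M N J X : C} {m : M ⟶ X} {n : N ⟶ X} {j : J ⟶ X}
    (hj : IsJoin m n j) : SubLE n j := by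
  obtain ⟨_, _, _, _, _, _, -, hnp, hw, hwj⟩ := hj
  exact hwj.subLE_iff.2 (hw.subLE_right.comp_dag_eq_zero (comp_dag_eq_zero_comm hnp.comp_eq_zero))

lemma IsJoin.eq_zero_of_orthogonal {N K J W X : C} {n : N ⟶ X} {k : K ⟶ X} {j : J ⟶ X}
    {w : W ⟶ X} (hj : IsJoin n k j) (hw : KernelMap w) (hwj : SubLE w j)
    (hwn : w ≫ dag n = 0) (hwk : w ≫ dag k = 0) : w = 0 := by
  obtain ⟨_, _, _, np, kp, v, hnp, hkp, hv, hvj⟩ := hj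
  have hwv : SubLE w v := hv.subLE_meet hw (hnp.subLE_iff.2 hwn) (hkp.subLE_iff.2 hwk)
  exact eq_zero_of_subLE_of_comp_dag_eq_zero hwv (hwj.comp_eq_zero hvj.comp_eq_zero)
    hv.kernelMap.daggerMono

lemma IsJoin.subLE_of_isOrthoOf {M P J Z X : C} {m : M ⟶ X} {p : P ⟶ X} {j : J ⟶ X}
    (hj : IsJoin m p j) (hp : IsOrthoOf m p) (x : Z ⟶ X) : SubLE x j := by
  obtain ⟨_, _, _, mp, pp, w, hmp, hpp, hw, hwj⟩ := hj
  have hwp : SubLE w p := hp.subLE_iff.2 (hw.subLE_left.comp_eq_zero hmp.comp_eq_zero)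
  have hw0 : w = 0 := eq_zero_of_subLE_of_comp_dag_eq_zero hwp
    (hw.subLE_right.comp_eq_zero hpp.comp_eq_zero) hp.kernelMap.daggerMono
  exact hwj.subLE_iff.2 (by rw [hw0, dag_zero, comp_zero])

variable (C) in
def IsBoolean : Prop :=
  ∀ {M N X : C} (m : M ⟶ X) (n : N ⟶ X), KernelMap m → KernelMap n →
    (∀ {W : C} (w : W ⟶ X), IsMeet m n w → w = 0) → n ≫ dag m = 0

variable (C) in
def IsDistributive : Prop :=
  ∀ {X M N K J A B D E : C} (m : M ⟶ X) (n : N ⟶ X) (k : K ⟶ X),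
    KernelMap m → KernelMap n → KernelMap k →
    ∀ (j : J ⟶ X) (a : A ⟶ X) (b : B ⟶ X) (c : D ⟶ X) (d : E ⟶ X),
      IsJoin n k j → IsMeet m j a → IsMeet m n b → IsMeet m k c → IsJoin b c d → SubEq a d

lemma IsBoolean.comp_dag_eq_zero (hB : IsBoolean C) {M N X : C} {m : M ⟶ X} {n : N ⟶ X}
    (hm : KernelMap m) (hn : KernelMap n)
    (hmn : ∀ {V : C} (v : V ⟶ X), KernelMap v → SubLE v m → SubLE v n → v = 0) :
    n ≫ dag m = 0 :=
  hB m n hm hn fun w hw => hmn w hw.kernelMap hw.subLE_left hw.subLE_right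

end Basic

section Kernels

variable [HasZeroMorphisms C] [HasZeroObject C] [DagKerCat C]

lemma exists_isOrthoOf {M X : C} (m : M ⟶ X) : ∃ (P : C) (p : P ⟶ X), IsOrthoOf m p :=
  DagKerCat.hasKer (dag m)

lemma KernelMap.comp {K M X : C} {k : K ⟶ M} {m : M ⟶ X} (hk : KernelMap k)
    (hm : KernelMap m) : KernelMap (k ≫ m) := by
  obtain ⟨_, g, hg⟩ := hk
  obtain ⟨_, l, hl⟩ := exists_isOrthoOf (k ≫ m)
  obtain ⟨_, q, hq⟩ := exists_isOrthoOf m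
  have hmm : m ≫ dag m = 𝟙 M := hm.daggerMono
  have hkm : DaggerMono (k ≫ m) := by
    show (k ≫ m) ≫ dag (k ≫ m) = 𝟙 K
    rw [dag_comp, Category.assoc, ← Category.assoc m, hmm, Category.id_comp, hg.2]
  refine (hl.symm_of_forall_subLE hkm fun x hx => ?_).kernelMap
  -- Both `m^⊥` and `g† ≫ m` lie below `(k ≫ m)^⊥`, so `x` factors through `m` and then `k`.
  have hql : SubLE q l :=
    hl.subLE_iff.2 (by rw [dag_comp, ← Category.assoc, hq.comp_eq_zero, zero_comp])
  obtain ⟨y, rfl⟩ := (hq.symm hm).subLE_iff.2 (hql.comp_dag_eq_zero hx)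
  have hgl : SubLE (dag g ≫ m) l := hl.subLE_iff.2 (by
    rw [dag_comp, Category.assoc, ← Category.assoc m, hmm, Category.id_comp, ← dag_comp,
      hg.comp_eq_zero, dag_zero])
  have hyg : y ≫ g = 0 := by
    have h := hgl.comp_dag_eq_zero hx
    rwa [dag_comp, dag_dag, Category.assoc, ← Category.assoc m, hmm, Category.id_comp] at h
  obtain ⟨z, rfl⟩ := hg.subLE_iff.2 hyg
  exact ⟨z, (Category.assoc _ _ _).symm⟩

lemma exists_isMeet {M N X : C} {m : M ⟶ X} {n : N ⟶ X} (hm : KernelMap m)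
    (hn : KernelMap n) : ∃ (W : C) (w : W ⟶ X), IsMeet m n w := by
  obtain ⟨_, p, hp⟩ := exists_isOrthoOf n
  have hpn : IsOrthoOf p n := hp.symm hn
  obtain ⟨K, k, hk⟩ := DagKerCat.hasKer (m ≫ dag p)
  refine ⟨K, k ≫ m, KernelMap.comp ⟨_, _, hk⟩ hm, ⟨k, rfl⟩,
    hpn.subLE_iff.2 (by rw [Category.assoc]; exact hk.comp_eq_zero), fun x _ hxm hxn => ?_⟩
  obtain ⟨φ, rfl⟩ := hxm
  obtain ⟨χ, rfl⟩ := hk.subLE_iff.2 (by rw [← Category.assoc]; exact hpn.subLE_iff.1 hxn)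
  exact ⟨χ, (Category.assoc _ _ _).symm⟩

lemma exists_isJoin {M N X : C} (m : M ⟶ X) (n : N ⟶ X) :
    ∃ (J : C) (j : J ⟶ X), IsJoin m n j := by
  obtain ⟨_, mp, hmp⟩ := exists_isOrthoOf m
  obtain ⟨_, np, hnp⟩ := exists_isOrthoOf n
  obtain ⟨_, w, hw⟩ := exists_isMeet hmp.kernelMap hnp.kernelMap
  obtain ⟨J, j, hj⟩ := exists_isOrthoOf w
  exact ⟨J, j, _, _, _, mp, np, w, hmp, hnp, hw, hj⟩

lemma IsJoin.join_subLE {M N J A X : C} {m : M ⟶ X} {n : N ⟶ X} {j : J ⟶ X} {x : A ⟶ X}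
    (hj : IsJoin m n j) (hx : KernelMap x) (hmx : SubLE m x) (hnx : SubLE n x) :
    SubLE j x := by
  obtain ⟨_, _, _, mp, np, w, hmp, hnp, hw, hwj⟩ := hj
  obtain ⟨_, s, hs⟩ := exists_isOrthoOf x
  have hsw : SubLE s w := hw.subLE_meet hs.kernelMap
    (hmp.subLE_iff.2 (hmx.comp_dag_eq_zero hs.comp_eq_zero))
    (hnp.subLE_iff.2 (hnx.comp_dag_eq_zero hs.comp_eq_zero))
  exact (hs.symm hx).subLE_iff.2 (hsw.comp_dag_eq_zero hwj.comp_eq_zero)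

lemma join_meet_subLE_meet_join {X M N K J A B D E : C} {m : M ⟶ X} {n : N ⟶ X}
    {k : K ⟶ X} {j : J ⟶ X} {a : A ⟶ X} {b : B ⟶ X} {c : D ⟶ X} {d : E ⟶ X}
    (hj : IsJoin n k j) (ha : IsMeet m j a) (hb : IsMeet m n b) (hc : IsMeet m k c)
    (hd : IsJoin b c d) : SubLE d a :=
  hd.join_subLE ha.kernelMap
    (ha.subLE_meet hb.kernelMap hb.subLE_left (hb.subLE_right.trans hj.left_subLE))
    (ha.subLE_meet hc.kernelMap hc.subLE_left (hc.subLE_right.trans hj.right_subLE))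

lemma IsBoolean.meet_join_subLE_join_meet (hB : IsBoolean C) {X M N K J A B D E : C}
    {m : M ⟶ X} {n : N ⟶ X} {k : K ⟶ X} {j : J ⟶ X} {a : A ⟶ X} {b : B ⟶ X} {c : D ⟶ X}
    {d : E ⟶ X} (hn : KernelMap n) (hk : KernelMap k) (hj : IsJoin n k j)
    (ha : IsMeet m j a) (hb : IsMeet m n b) (hc : IsMeet m k c) (hd : IsJoin b c d) :
    SubLE a d := by
  obtain ⟨_, d', hd'⟩ := exists_isOrthoOf d
  have orth : ∀ {V N B : C} {v : V ⟶ X} {n : N ⟶ X} {b : B ⟶ X}, KernelMap v →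
      KernelMap n → IsMeet m n b → SubLE b d → SubLE v m → SubLE v d' → v ≫ dag n = 0 := by
    intro V N B v n b hv hn hb hbd hvm hvd'
    refine comp_dag_eq_zero_comm (hB.comp_dag_eq_zero hv hn fun u hu huv hun => ?_)
    exact eq_zero_of_subLE_of_comp_dag_eq_zero ((hb.subLE_meet hu (huv.trans hvm) hun).trans hbd)
      ((huv.trans hvd').comp_eq_zero hd'.comp_eq_zero) hd.kernelMap.daggerMono
  have hd'a : ∀ {V : C} (v : V ⟶ X), KernelMap v → SubLE v d' → SubLE v a → v = 0 :=
    fun v hv hvd' hva => hj.eq_zero_of_orthogonal hv (hva.trans ha.subLE_right)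
      (orth hv hn hb hd.left_subLE (hva.trans ha.subLE_left) hvd')
      (orth hv hk hc hd.right_subLE (hva.trans ha.subLE_left) hvd')
  exact (hd'.symm hd.kernelMap).subLE_iff.2 (hB.comp_dag_eq_zero hd'.kernelMap ha.kernelMap hd'a)

theorem IsBoolean.isDistributive (hB : IsBoolean C) : IsDistributive C :=
  fun _ _ _ _ hn hk _ _ _ _ _ hj ha hb hc hd =>
    ⟨hB.meet_join_subLE_join_meet hn hk hj ha hb hc hd, join_meet_subLE_meet_join hj ha hb hc hd⟩

theorem IsDistributive.isBoolean (hD : IsDistributive C) : IsBoolean C := by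
  intro M N X m n hm hn hmn
  obtain ⟨_, p, hp⟩ := exists_isOrthoOf m
  obtain ⟨_, j, hj⟩ := exists_isJoin m p
  obtain ⟨_, a, ha⟩ := exists_isMeet hn hj.kernelMap
  obtain ⟨_, b, hb⟩ := exists_isMeet hn hm
  obtain ⟨_, c, hc⟩ := exists_isMeet hn hp.kernelMap
  obtain ⟨_, d, hd⟩ := exists_isJoin b c
  have hna : SubLE n a := ha.subLE_meet hn (subLE_refl n) (hj.subLE_of_isOrthoOf hp n)
  have had : SubLE a d := (hD n m p hn hm hp.kernelMap j a b c d hj ha hb hc hd).1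
  have hdc : SubLE d c :=
    hd.join_subLE hc.kernelMap (by rw [hmn b hb.symm]; exact ⟨0, zero_comp⟩) (subLE_refl c)
  exact hp.subLE_iff.1 (((hna.trans had).trans hdc).trans hc.subLE_right)

end Kernels

end Dagger

open Dagger in
/-- a dagger kernel category is Boolean (`m ∧ n = 0` implies
`m† ∘ n = 0` for kernels) iff every `KSub(X)` is a Boolean algebra
(i.e. distributive). -/
theorem stmt15 {C : Type u} [Category.{v} C] [HasZeroMorphisms C] [HasZeroObject C]
    [DagKerCat C] :
    (∀ {M N X : C} (m : M ⟶ X) (n : N ⟶ X), KernelMap m → KernelMap n →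
      (∀ {W : C} (w : W ⟶ X), IsMeet m n w → w = 0) →
      n ≫ Dagger.dag m = 0)
    ↔
    (∀ {X M N K J A B D E : C} (m : M ⟶ X) (n : N ⟶ X) (k : K ⟶ X),
      KernelMap m → KernelMap n → KernelMap k →
      ∀ (j : J ⟶ X) (a : A ⟶ X) (b : B ⟶ X) (c : D ⟶ X) (d : E ⟶ X),
        IsJoin n k j → IsMeet m j a → IsMeet m n b → IsMeet m k c →
        IsJoin b c d → SubEq a d) :=
  ⟨IsBoolean.isDistributive, IsDistributive.isBoolean⟩
end

section
/- In a dagger kernel category, the mapping m ↦ E_m := m ∘ m† is an order isomorphism between KSub(X) and the poset of self-adjoint endomorphisms p : X → X with p ≤ id (with respect to the image-factorisation order on homsets); every such p is automatically idempotent. If moreover zero-epis are epis, these coincide with all self-adjoint idempotents on X. -/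
open CategoryTheory Limits

universe v u

open Dagger

variable {C : Type u} [Category.{v} C] [HasZeroMorphisms C] [HasZeroObject C]
  [DagKerCat C]

/-- The factorisation order on a homset: `f ≤ g` when the
image/coimage factorisations of `f` and `g` are related by (dagger monic)
comparison maps `φ, ψ` satisfying the four equations of Definition 7.1. -/
def HomLE {X Y : C} (f g : X ⟶ Y) : Prop :=
  ∃ (If Ifd Ig Igd : C) (i_f : If ⟶ Y) (i_fd : Ifd ⟶ X) (m_f : Ifd ⟶ If)
    (i_g : Ig ⟶ Y) (i_gd : Igd ⟶ X) (m_g : Igd ⟶ Ig)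
    (φ : If ⟶ Ig) (ψ : Ifd ⟶ Igd),
    IsImg f i_f ∧ IsImg (Dagger.dag f) i_fd ∧
    Dagger.dag i_fd ≫ m_f ≫ i_f = f ∧
    IsImg g i_g ∧ IsImg (Dagger.dag g) i_gd ∧
    Dagger.dag i_gd ≫ m_g ≫ i_g = g ∧
    Dagger.dag i_gd ≫ Dagger.dag ψ = Dagger.dag i_fd ∧
    m_f ≫ φ = ψ ≫ m_g ∧
    m_g ≫ Dagger.dag φ = Dagger.dag ψ ≫ m_f ∧
    φ ≫ i_g = i_f

/-! A kernel `m` is dagger monic, so it is the image of the self-adjoint map `E_m = m ∘ m†`.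
Taking `m` in all four image slots and the inclusion `M ⟶ N` as both comparison maps gives
`E_m ≤ E_n` from `m ≤ n`; conversely, the comparison map `φ` between the images gives `m ≤ n`.
If `p ≤ 𝟙`, the comparison equations together with `i_𝟙 ∘ m_𝟙 ∘ i_{𝟙†}† = 𝟙` give
`m_p ∘ i_{p†}† = i_p†`, so the factorisation of `p` collapses to `i_p ∘ i_p†`. Finally, every `f`
factors through its image `i` as `f = i ∘ e` with `e = i† ∘ f` zero-epic; when `e` is epic and `p`
is a self-adjoint idempotent, idempotency forces `e ∘ i = 𝟙`, whence `e† = p ∘ i = i` and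
`p = i ∘ i†`. -/

namespace Dagger

theorem SubLE.trans_s18 {C : Type u} [Category.{v} C] {L M N X : C} {l : L ⟶ X} {m : M ⟶ X}
    {n : N ⟶ X} (hlm : SubLE l m) (hmn : SubLE m n) : SubLE l n := by
  obtain ⟨φ, rfl⟩ := hlm
  obtain ⟨ψ, rfl⟩ := hmn
  exact ⟨φ ≫ ψ, Category.assoc _ _ _⟩

section DaggerCategory

variable {C : Type u} [Category.{v} C] [HasZeroMorphisms C] [Dagger C]

theorem dag_comp_dag_eq_zero {X Y Z : C} {f : X ⟶ Y} {g : Y ⟶ Z} (h : f ≫ g = 0) :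
    dag g ≫ dag f = 0 := by
  rw [← dag_comp, h, dag_zero]

theorem dag_dag_comp_self {M X : C} (m : M ⟶ X) : dag (dag m ≫ m) = dag m ≫ m := by
  rw [dag_comp, dag_dag]

theorem DaggerMono.comp_dag {M X : C} {m : M ⟶ X} (hm : DaggerMono m) : m ≫ dag m = 𝟙 M :=
  hm

theorem DaggerMono.comp_dag_assoc {M X Z : C} {m : M ⟶ X} (hm : DaggerMono m) (g : M ⟶ Z) :
    m ≫ dag m ≫ g = g := by
  rw [← Category.assoc, hm.comp_dag, Category.id_comp]

theorem DaggerMono.mono {M X : C} {m : M ⟶ X} (hm : DaggerMono m) : Mono m :=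
  ⟨fun a b h => by simpa [hm.comp_dag] using congrArg (· ≫ dag m) h⟩

theorem DaggerMono.dag_comp_self_idem {M X : C} {m : M ⟶ X} (hm : DaggerMono m) :
    (dag m ≫ m) ≫ (dag m ≫ m) = dag m ≫ m := by
  rw [Category.assoc, hm.comp_dag_assoc]

theorem KernelMap.daggerMono_s18 {M X : C} {m : M ⟶ X} (hm : KernelMap m) : DaggerMono m :=
  let ⟨_, _, h⟩ := hm; h.2

theorem kernelMap_id (X : C) : KernelMap (𝟙 X) :=
  ⟨X, 0, ⟨comp_zero, fun g _ => ⟨g, Category.comp_id g, fun h hh => by simpa using hh⟩⟩,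
    by rw [DaggerMono, dag_id, Category.comp_id]⟩

theorem IsDagKer.comp_daggerMono {K X Y Z : C} {f : X ⟶ Y} {n : Y ⟶ Z} {k : K ⟶ X}
    (hk : IsDagKer f k) (hn : DaggerMono n) : IsDagKer (f ≫ n) k := by
  refine ⟨⟨by rw [reassoc_of% hk.1.comp_zero, zero_comp], fun g hg => hk.1.lift g ?_⟩, hk.2⟩
  simpa [hn.comp_dag] using congrArg (· ≫ dag n) hg

theorem IsDagKer.isOrthoOf_isOrthoOf {K M X Y : C} {f : X ⟶ Y} {m : M ⟶ X} {l : K ⟶ X}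
    (hm : IsDagKer f m) (hl : IsOrthoOf m l) : IsOrthoOf l m := by
  refine ⟨⟨by simpa [dag_dag] using dag_comp_dag_eq_zero hl.1.comp_zero, fun g hg => ?_⟩, hm.2⟩
  obtain ⟨v, hv, -⟩ := hl.1.lift (dag f)
    (by simpa [dag_dag] using dag_comp_dag_eq_zero hm.1.comp_zero)
  refine hm.1.lift g ?_
  rw [← dag_dag f, ← hv, dag_comp, reassoc_of% hg, zero_comp]

theorem IsImg.kernelMap {I X Y : C} {f : X ⟶ Y} {i : I ⟶ Y} (h : IsImg f i) : KernelMap i :=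
  let ⟨_, _, _, hi⟩ := h; ⟨_, _, hi⟩

theorem IsImg.daggerMono_s18 {I X Y : C} {f : X ⟶ Y} {i : I ⟶ Y} (h : IsImg f i) : DaggerMono i :=
  h.kernelMap.daggerMono_s18

theorem IsImg.subLE {I I' X Y : C} {f : X ⟶ Y} {i : I ⟶ Y} {i' : I' ⟶ Y}
    (h : IsImg f i) (h' : IsImg f i') : SubLE i i' := by
  obtain ⟨K, k, hk, hi⟩ := h
  obtain ⟨K', k', hk', hi'⟩ := h'
  obtain ⟨β, rfl, -⟩ := hk.1.lift k' hk'.1.comp_zero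
  obtain ⟨φ, hφ, -⟩ := hi'.1.lift i (by rw [dag_comp, reassoc_of% hi.1.comp_zero, zero_comp])
  exact ⟨φ, hφ⟩

theorem IsImg.comp_dag_comp {I X Y : C} {f : X ⟶ Y} {i : I ⟶ Y} (h : IsImg f i) :
    (f ≫ dag i) ≫ i = f := by
  obtain ⟨K, k, hk, hi⟩ := h
  obtain ⟨e, rfl, -⟩ := hi.1.lift f (by simpa [dag_dag] using dag_comp_dag_eq_zero hk.1.comp_zero)
  rw [Category.assoc, Category.assoc, hi.2.comp_dag_assoc]

theorem IsImg.zeroEpi_comp_dag {I X Y : C} {f : X ⟶ Y} {i : I ⟶ Y} (h : IsImg f i) :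
    ZeroEpi (f ≫ dag i) := by
  obtain ⟨K, k, hk, hi⟩ := h
  intro Z g hg
  have hg' : (dag g ≫ i) ≫ dag f = 0 := by
    simpa [dag_comp, dag_dag] using dag_comp_dag_eq_zero (show f ≫ dag i ≫ g = 0 by simpa using hg)
  obtain ⟨w, hw, -⟩ := hk.1.lift (dag g ≫ i) hg'
  have hdag : dag i ≫ g = dag k ≫ dag w := by rw [← dag_comp, hw, dag_comp, dag_dag]
  calc g = i ≫ dag i ≫ g := by rw [hi.2.comp_dag_assoc]
    _ = 0 := by rw [hdag, reassoc_of% hi.1.comp_zero, zero_comp]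

end DaggerCategory

theorem exists_isImg {X Y : C} (f : X ⟶ Y) : ∃ (I : C) (i : I ⟶ Y), IsImg f i := by
  obtain ⟨K, k, hk⟩ := DagKerCat.hasKer (dag f)
  obtain ⟨I, i, hi⟩ := DagKerCat.hasKer (dag k)
  exact ⟨I, i, K, k, hk, hi⟩

theorem KernelMap.isImg_dag_comp_self {M X : C} {m : M ⟶ X} (hm : KernelMap m) :
    IsImg (dag m ≫ m) m := by
  obtain ⟨Y, f, hf⟩ := hm
  obtain ⟨K, l, hl⟩ := DagKerCat.hasKer (dag m)
  refine ⟨K, l, ?_, hf.isOrthoOf_isOrthoOf hl⟩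
  rw [dag_dag_comp_self]
  exact hl.comp_daggerMono hf.2

theorem homLE_dag_comp_self_of_subLE {M N X : C} {m : M ⟶ X} {n : N ⟶ X} (hm : KernelMap m)
    (hn : KernelMap n) (h : SubLE m n) : HomLE (dag m ≫ m) (dag n ≫ n) := by
  obtain ⟨φ, hφ⟩ := h
  refine ⟨M, M, N, N, m, m, 𝟙 M, n, n, 𝟙 N, φ, φ, hm.isImg_dag_comp_self, ?_, by simp,
    hn.isImg_dag_comp_self, ?_, by simp, by rw [← dag_comp, hφ], by simp, by simp, hφ⟩
  · rw [dag_dag_comp_self]; exact hm.isImg_dag_comp_self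
  · rw [dag_dag_comp_self]; exact hn.isImg_dag_comp_self

theorem HomLE.subLE_of_isImg {I J X Y : C} {f g : X ⟶ Y} {i : I ⟶ Y} {j : J ⟶ Y}
    (h : HomLE f g) (hi : IsImg f i) (hj : IsImg g j) : SubLE i j := by
  obtain ⟨_, _, _, _, i_f, _, _, i_g, _, _, φ, _, hif, -, -, hig, -, -, -, -, -, hφ⟩ := h
  exact ((hi.subLE hif).trans_s18 ⟨φ, hφ⟩).trans_s18 (hig.subLE hj)

theorem subLE_iff_homLE_dag_comp_self {M N X : C} {m : M ⟶ X} {n : N ⟶ X} (hm : KernelMap m)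
    (hn : KernelMap n) : SubLE m n ↔ HomLE (dag m ≫ m) (dag n ≫ n) :=
  ⟨homLE_dag_comp_self_of_subLE hm hn,
    fun h => h.subLE_of_isImg hm.isImg_dag_comp_self hn.isImg_dag_comp_self⟩

theorem HomLE.exists_kernelMap_eq_dag_comp_self {X : C} {p : X ⟶ X} (h : HomLE p (𝟙 X)) :
    ∃ (M : C) (m : M ⟶ X), KernelMap m ∧ p = dag m ≫ m := by
  obtain ⟨I, _, _, _, i_p, i_pd, m_p, i_1, i_1d, m_1, φ, ψ, hip, -, hfac_p, hi1, -, hfac_1,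
    e1, -, e3, e4⟩ := h
  refine ⟨I, i_p, hip.kernelMap, ?_⟩
  have hcoim : dag i_pd ≫ m_p = dag i_p := calc
    dag i_pd ≫ m_p = dag i_1d ≫ m_1 ≫ dag φ := by rw [← e1, Category.assoc, e3]
    _ = (dag i_1d ≫ m_1 ≫ i_1) ≫ dag i_1 ≫ dag φ := by
      rw [Category.assoc, Category.assoc, hi1.daggerMono_s18.comp_dag_assoc]
    _ = dag i_p := by rw [hfac_1, Category.id_comp, ← dag_comp, e4]
  rw [← hfac_p, ← hcoim, Category.assoc]

theorem exists_kernelMap_eq_dag_comp_self_of_idem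
    (hepi : ∀ {A B : C} (e : A ⟶ B), ZeroEpi e → Epi e) {X : C} {p : X ⟶ X} (hp : dag p = p)
    (hpp : p ≫ p = p) :
    ∃ (M : C) (m : M ⟶ X), KernelMap m ∧ p = dag m ≫ m := by
  obtain ⟨I, i, hi⟩ := exists_isImg p
  set e := p ≫ dag i with he
  have hfac : e ≫ i = p := hi.comp_dag_comp
  have : Epi e := hepi e hi.zeroEpi_comp_dag
  have : Mono i := hi.daggerMono_s18.mono
  have hie : i ≫ e = 𝟙 I := by
    rw [← cancel_epi e, ← cancel_mono i]
    simp only [Category.assoc, Category.comp_id, hfac]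
    rw [← Category.assoc, hfac, hpp]
  have hdag : dag e = i := calc
    dag e = i ≫ p := by rw [he, dag_comp, dag_dag, hp]
    _ = i := by rw [← hfac, reassoc_of% hie]
  exact ⟨I, i, hi.kernelMap, by rw [← hfac, ← hdag, dag_dag]⟩

end Dagger

/-- `m ↦ E_m = m ∘ m†` is an order isomorphism between `KSub(X)`
and the self-adjoint endomorphisms `p ≤ id` (all of which are idempotent);
if zero-epis are epis, these are exactly the self-adjoint idempotents. -/
theorem stmt18 (X : C) :
    (∀ {M : C} (m : M ⟶ X), KernelMap m →
      Dagger.dag (Dagger.dag m ≫ m) = Dagger.dag m ≫ m ∧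
      HomLE (Dagger.dag m ≫ m) (𝟙 X) ∧
      (Dagger.dag m ≫ m) ≫ (Dagger.dag m ≫ m) = Dagger.dag m ≫ m) ∧
    (∀ {M N : C} (m : M ⟶ X) (n : N ⟶ X), KernelMap m → KernelMap n →
      (SubLE m n ↔ HomLE (Dagger.dag m ≫ m) (Dagger.dag n ≫ n))) ∧
    (∀ (p : X ⟶ X), Dagger.dag p = p → HomLE p (𝟙 X) →
      ∃ (M : C) (m : M ⟶ X), KernelMap m ∧ p = Dagger.dag m ≫ m) ∧
    ((∀ {A B : C} (e : A ⟶ B), ZeroEpi e → Epi e) →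
      ∀ (p : X ⟶ X), Dagger.dag p = p → p ≫ p = p →
        ∃ (M : C) (m : M ⟶ X), KernelMap m ∧ p = Dagger.dag m ≫ m) := by
  refine ⟨fun m hm => ⟨dag_dag_comp_self m, ?_, hm.daggerMono_s18.dag_comp_self_idem⟩,
    fun _ _ => subLE_iff_homLE_dag_comp_self,
    fun p _ hp => hp.exists_kernelMap_eq_dag_comp_self,
    fun hepi p hp hpp => exists_kernelMap_eq_dag_comp_self_of_idem hepi hp hpp⟩
  simpa [dag_id] using homLE_dag_comp_self_of_subLE hm (kernelMap_id X) ⟨m, Category.comp_id m⟩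
end
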